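/- The space E_IV is primitive: for every 5-dimensional subspace H ⊆ ℂ^6 there exists a ∈ ℂ^6 such that the restriction of the linear map M_IV(a) : ℂ^6 → ℂ^6 to H has rank at least 4, and for every 5-dimensional subspace H' ⊆ ℂ^6 there exists a ∈ ℂ^6 such that the restriction of the transpose map M_IV(a)ᵀ : ℂ^6 → ℂ^6 to H' has rank at least 4. -/
import Mathlib

open Matrix

/-- Case (IV) of the main theorem: for `a = (a1,…,a6) ∈ ℂ^6`, the matrix `M_IV(a)`. -/
noncomputable def MIV (a : Fin 6 → ℂ) : Matrix (Fin 6) (Fin 6) ℂ :=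
  !![a 0, a 1, 0, 0, -a 4, -a 5;
     0, a 0, 0, 0, 0, -a 4;
     0, 0, a 0, a 1, a 2, a 3;
     0, 0, 0, a 0, 0, a 2;
     a 2, a 3, a 4, a 5, 0, 0;
     0, a 2, 0, a 4, 0, 0]

lemma mem_span_pair {x : Fin 6 → ℂ} {i j : Fin 6} (hij : i ≠ j)
    (h : ∀ k, k ≠ i → k ≠ j → x k = 0) :
    x ∈ Submodule.span ℂ {(Pi.single i 1 : Fin 6 → ℂ), (Pi.single j 1 : Fin 6 → ℂ)} := by
  have hx : x = x i • (Pi.single i 1 : Fin 6 → ℂ) + x j • (Pi.single j 1 : Fin 6 → ℂ) := by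
    funext k
    by_cases hki : k = i
    · subst hki; simp [Pi.single_apply, Ne.symm hij]
    · by_cases hkj : k = j
      · subst hkj; simp [Pi.single_apply, hki]
      · simp [Pi.single_apply, hki, hkj, h k hki hkj]
  rw [hx]
  exact Submodule.add_mem _
    (Submodule.smul_mem _ _ (Submodule.subset_span (Set.mem_insert _ _)))
    (Submodule.smul_mem _ _ (Submodule.subset_span (Set.mem_insert_of_mem _ rfl)))

lemma rank_ge (H : Submodule ℂ (Fin 6 → ℂ)) (hH : Module.finrank ℂ H = 5)
    (f : (Fin 6 → ℂ) →ₗ[ℂ] (Fin 6 → ℂ)) (i j : Fin 6)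
    (hker : LinearMap.ker f =
      Submodule.span ℂ {(Pi.single i 1 : Fin 6 → ℂ), (Pi.single j 1 : Fin 6 → ℂ)})
    (hiH : (Pi.single i 1 : Fin 6 → ℂ) ∉ H) :
    4 ≤ Module.finrank ℂ (H.map f) := by
  have hk2 : Module.finrank ℂ (LinearMap.ker f) ≤ 2 := by
    rw [hker, Submodule.span_insert]
    refine le_trans (Submodule.finrank_add_le_finrank_add_finrank _ _) ?_
    have h1 : Module.finrank ℂ (ℂ ∙ (Pi.single i 1 : Fin 6 → ℂ)) = 1 :=
      finrank_span_singleton (fun h => by simpa using congrFun h i)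
    have h2 : Module.finrank ℂ (Submodule.span ℂ {(Pi.single j 1 : Fin 6 → ℂ)}) ≤ 1 := by
      rw [finrank_span_singleton (fun h => by simpa using congrFun h j : (Pi.single j 1 : Fin 6 → ℂ) ≠ 0)]
    omega
  -- the kernel intersected with H is strictly smaller than the kernel
  have hmem : (Pi.single i 1 : Fin 6 → ℂ) ∈ LinearMap.ker f := by
    rw [hker]; exact Submodule.subset_span (Set.mem_insert _ _)
  have hlt : LinearMap.ker f ⊓ H < LinearMap.ker f := by
    refine lt_of_le_of_ne inf_le_left fun hEq => hiH ?_
    rw [← hEq] at hmem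
    exact hmem.2
  have hinf : Module.finrank ℂ ((LinearMap.ker f ⊓ H : Submodule ℂ (Fin 6 → ℂ))) ≤ 1 := by
    have := Submodule.finrank_lt_finrank_of_lt hlt
    omega
  -- rank-nullity for the restriction
  have hrn := LinearMap.finrank_range_add_finrank_ker (f.domRestrict H)
  rw [LinearMap.range_domRestrict, LinearMap.ker_domRestrict, hH] at hrn
  have hcomap : Module.finrank ℂ ((LinearMap.ker f).comap H.subtype) =
      Module.finrank ℂ ((H ⊓ LinearMap.ker f : Submodule ℂ (Fin 6 → ℂ))) := by
    rw [← Submodule.map_comap_subtype, Submodule.finrank_map_subtype_eq]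
  rw [hcomap, inf_comm] at hrn
  omega

lemma singles_not_all_mem (H : Submodule ℂ (Fin 6 → ℂ)) (hH : Module.finrank ℂ H = 5) :
    ∃ i : Fin 6, (Pi.single i 1 : Fin 6 → ℂ) ∉ H := by
  by_contra hall
  push_neg at hall
  have htop : H = ⊤ := by
    rw [← top_le_iff, ← (Pi.basisFun ℂ (Fin 6)).span_eq, Submodule.span_le]
    rintro x ⟨i, rfl⟩
    simpa [Pi.basisFun_apply] using hall i
  rw [htop, finrank_top, Module.finrank_pi] at hH
  simp at hH

/-- compute the kernel of `mulVecLin N` when it is spanned by two standard vectors. -/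
lemma ker_eq_span (N : Matrix (Fin 6) (Fin 6) ℂ) (i j : Fin 6) (hij : i ≠ j)
    (h1 : N.mulVec (Pi.single i 1) = 0) (h2 : N.mulVec (Pi.single j 1) = 0)
    (h3 : ∀ x : Fin 6 → ℂ, N.mulVec x = 0 → ∀ k, k ≠ i → k ≠ j → x k = 0) :
    LinearMap.ker N.mulVecLin =
      Submodule.span ℂ {(Pi.single i 1 : Fin 6 → ℂ), (Pi.single j 1 : Fin 6 → ℂ)} := by
  apply le_antisymm
  · intro x hx
    exact mem_span_pair hij (h3 x hx)
  · rw [Submodule.span_le]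
    rintro x (rfl | rfl)
    · simpa using h1
    · simpa using h2

@[simp] lemma cons_val_five {α : Type*} {m : ℕ} (x : α) (u : Fin (m + 4 + 1) → α) :
    Matrix.vecCons x u 5 = Matrix.vecHead (Matrix.vecTail (Matrix.vecTail (Matrix.vecTail (Matrix.vecTail u)))) :=
  rfl

section kernels

lemma kerN1 : LinearMap.ker (MIV ![1,0,0,0,0,0]).mulVecLin =
    Submodule.span ℂ {(Pi.single 4 1 : Fin 6 → ℂ), (Pi.single 5 1 : Fin 6 → ℂ)} := by
  apply ker_eq_span _ _ _ (by decide)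
  · funext k; fin_cases k <;> simp [MIV, mulVec, dotProduct, Fin.sum_univ_six, Matrix.vecHead, Matrix.vecTail]
  · funext k; fin_cases k <;> simp [MIV, mulVec, dotProduct, Fin.sum_univ_six, Matrix.vecHead, Matrix.vecTail]
  · intro x hx k hk1 hk2
    have e0 := congrFun hx 0; have e1 := congrFun hx 1
    have e2 := congrFun hx 2; have e3 := congrFun hx 3
    simp [MIV, mulVec, dotProduct, Fin.sum_univ_six, Matrix.vecHead, Matrix.vecTail] at e0 e1 e2 e3
    fin_cases k <;> simp_all


lemma kerN1t : LinearMap.ker ((MIV ![1,0,0,0,0,0])ᵀ).mulVecLin =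
    Submodule.span ℂ {(Pi.single 4 1 : Fin 6 → ℂ), (Pi.single 5 1 : Fin 6 → ℂ)} := by
  apply ker_eq_span _ _ _ (by decide)
  · funext k; fin_cases k <;> simp [MIV, mulVec, dotProduct, Fin.sum_univ_six, Matrix.vecHead, Matrix.vecTail, Matrix.transpose_apply]
  · funext k; fin_cases k <;> simp [MIV, mulVec, dotProduct, Fin.sum_univ_six, Matrix.vecHead, Matrix.vecTail, Matrix.transpose_apply]
  · intro x hx k hk1 hk2
    have e0 := congrFun hx 0; have e1 := congrFun hx 1
    have e2 := congrFun hx 2; have e3 := congrFun hx 3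
    have e4 := congrFun hx 4; have e5 := congrFun hx 5
    simp [MIV, mulVec, dotProduct, Fin.sum_univ_six, Matrix.vecHead, Matrix.vecTail, Matrix.transpose_apply] at e0 e1 e2 e3 e4 e5
    fin_cases k <;> simp_all

lemma kerN2 : LinearMap.ker (MIV ![0,0,1,0,0,0]).mulVecLin =
    Submodule.span ℂ {(Pi.single 2 1 : Fin 6 → ℂ), (Pi.single 3 1 : Fin 6 → ℂ)} := by
  apply ker_eq_span _ _ _ (by decide)
  · funext k; fin_cases k <;> simp [MIV, mulVec, dotProduct, Fin.sum_univ_six, Matrix.vecHead, Matrix.vecTail, Matrix.transpose_apply]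
  · funext k; fin_cases k <;> simp [MIV, mulVec, dotProduct, Fin.sum_univ_six, Matrix.vecHead, Matrix.vecTail, Matrix.transpose_apply]
  · intro x hx k hk1 hk2
    have e0 := congrFun hx 0; have e1 := congrFun hx 1
    have e2 := congrFun hx 2; have e3 := congrFun hx 3
    have e4 := congrFun hx 4; have e5 := congrFun hx 5
    simp [MIV, mulVec, dotProduct, Fin.sum_univ_six, Matrix.vecHead, Matrix.vecTail, Matrix.transpose_apply] at e0 e1 e2 e3 e4 e5
    fin_cases k <;> simp_all

lemma kerN2t : LinearMap.ker ((MIV ![0,0,1,0,0,0])ᵀ).mulVecLin =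
    Submodule.span ℂ {(Pi.single 0 1 : Fin 6 → ℂ), (Pi.single 1 1 : Fin 6 → ℂ)} := by
  apply ker_eq_span _ _ _ (by decide)
  · funext k; fin_cases k <;> simp [MIV, mulVec, dotProduct, Fin.sum_univ_six, Matrix.vecHead, Matrix.vecTail, Matrix.transpose_apply]
  · funext k; fin_cases k <;> simp [MIV, mulVec, dotProduct, Fin.sum_univ_six, Matrix.vecHead, Matrix.vecTail, Matrix.transpose_apply]
  · intro x hx k hk1 hk2
    have e0 := congrFun hx 0; have e1 := congrFun hx 1
    have e2 := congrFun hx 2; have e3 := congrFun hx 3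
    have e4 := congrFun hx 4; have e5 := congrFun hx 5
    simp [MIV, mulVec, dotProduct, Fin.sum_univ_six, Matrix.vecHead, Matrix.vecTail, Matrix.transpose_apply] at e0 e1 e2 e3 e4 e5
    fin_cases k <;> simp_all

lemma kerN3 : LinearMap.ker (MIV ![0,0,0,0,1,0]).mulVecLin =
    Submodule.span ℂ {(Pi.single 0 1 : Fin 6 → ℂ), (Pi.single 1 1 : Fin 6 → ℂ)} := by
  apply ker_eq_span _ _ _ (by decide)
  · funext k; fin_cases k <;> simp [MIV, mulVec, dotProduct, Fin.sum_univ_six, Matrix.vecHead, Matrix.vecTail, Matrix.transpose_apply]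
  · funext k; fin_cases k <;> simp [MIV, mulVec, dotProduct, Fin.sum_univ_six, Matrix.vecHead, Matrix.vecTail, Matrix.transpose_apply]
  · intro x hx k hk1 hk2
    have e0 := congrFun hx 0; have e1 := congrFun hx 1
    have e2 := congrFun hx 2; have e3 := congrFun hx 3
    have e4 := congrFun hx 4; have e5 := congrFun hx 5
    simp [MIV, mulVec, dotProduct, Fin.sum_univ_six, Matrix.vecHead, Matrix.vecTail, Matrix.transpose_apply] at e0 e1 e2 e3 e4 e5
    fin_cases k <;> simp_all

lemma kerN3t : LinearMap.ker ((MIV ![0,0,0,0,1,0])ᵀ).mulVecLin =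
    Submodule.span ℂ {(Pi.single 2 1 : Fin 6 → ℂ), (Pi.single 3 1 : Fin 6 → ℂ)} := by
  apply ker_eq_span _ _ _ (by decide)
  · funext k; fin_cases k <;> simp [MIV, mulVec, dotProduct, Fin.sum_univ_six, Matrix.vecHead, Matrix.vecTail, Matrix.transpose_apply]
  · funext k; fin_cases k <;> simp [MIV, mulVec, dotProduct, Fin.sum_univ_six, Matrix.vecHead, Matrix.vecTail, Matrix.transpose_apply]
  · intro x hx k hk1 hk2
    have e0 := congrFun hx 0; have e1 := congrFun hx 1
    have e2 := congrFun hx 2; have e3 := congrFun hx 3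
    have e4 := congrFun hx 4; have e5 := congrFun hx 5
    simp [MIV, mulVec, dotProduct, Fin.sum_univ_six, Matrix.vecHead, Matrix.vecTail, Matrix.transpose_apply] at e0 e1 e2 e3 e4 e5
    fin_cases k <;> simp_all

end kernels
/-- `E_IV` is primitive: for every hyperplane (`5`-dimensional subspace) `H ⊆ ℂ^6`
some `M_IV(a)` restricted to `H` has rank at least `4`, and likewise for the
transposed maps. -/
theorem stmt4 :
    (∀ H : Submodule ℂ (Fin 6 → ℂ), Module.finrank ℂ H = 5 →
      ∃ a : Fin 6 → ℂ, 4 ≤ Module.finrank ℂ (H.map (MIV a).mulVecLin)) ∧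
    (∀ H' : Submodule ℂ (Fin 6 → ℂ), Module.finrank ℂ H' = 5 →
      ∃ a : Fin 6 → ℂ, 4 ≤ Module.finrank ℂ (H'.map ((MIV a).transpose).mulVecLin)) := by
  constructor
  · intro H hH
    obtain ⟨i, hi⟩ := singles_not_all_mem H hH
    fin_cases i
    · exact ⟨![0,0,0,0,1,0], rank_ge H hH _ 0 1 kerN3 hi⟩
    · exact ⟨![0,0,0,0,1,0], rank_ge H hH _ 1 0 (by rw [kerN3, Set.pair_comm]) hi⟩
    · exact ⟨![0,0,1,0,0,0], rank_ge H hH _ 2 3 kerN2 hi⟩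
    · exact ⟨![0,0,1,0,0,0], rank_ge H hH _ 3 2 (by rw [kerN2, Set.pair_comm]) hi⟩
    · exact ⟨![1,0,0,0,0,0], rank_ge H hH _ 4 5 kerN1 hi⟩
    · exact ⟨![1,0,0,0,0,0], rank_ge H hH _ 5 4 (by rw [kerN1, Set.pair_comm]) hi⟩
  · intro H hH
    obtain ⟨i, hi⟩ := singles_not_all_mem H hH
    fin_cases i
    · exact ⟨![0,0,1,0,0,0], rank_ge H hH _ 0 1 kerN2t hi⟩
    · exact ⟨![0,0,1,0,0,0], rank_ge H hH _ 1 0 (by rw [kerN2t, Set.pair_comm]) hi⟩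
    · exact ⟨![0,0,0,0,1,0], rank_ge H hH _ 2 3 kerN3t hi⟩
    · exact ⟨![0,0,0,0,1,0], rank_ge H hH _ 3 2 (by rw [kerN3t, Set.pair_comm]) hi⟩
    · exact ⟨![1,0,0,0,0,0], rank_ge H hH _ 4 5 kerN1t hi⟩
    · exact ⟨![1,0,0,0,0,0], rank_ge H hH _ 5 4 (by rw [kerN1t, Set.pair_comm]) hi⟩
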